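/- Let ℓ be an odd prime. The set of indices [GL₂(ℤ/ℓℤ) : G] over subgroups G of GL₂(ℤ/ℓℤ) that belong to the split Cartan C_s(ℓ) equals the set of positive integers divisible by ℓ(ℓ+1) and dividing ℓ(ℓ+1)(ℓ−1)²/q for some prime q dividing ℓ−1. -/

import Mathlib

open Matrix

abbrev GL2 (ℓ : ℕ) : Type := GL (Fin 2) (ZMod ℓ)

namespace Paper

/-- The underlying matrix of an element of `GL₂(ℤ/ℓℤ)`. -/
def mat {ℓ : ℕ} (g : GL2 ℓ) : Matrix (Fin 2) (Fin 2) (ZMod ℓ) := ↑g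

/-- The set of scalar matrices `Z(ℓ)`. -/
def ZSet (ℓ : ℕ) : Set (GL2 ℓ) :=
  { g | ∃ x : ZMod ℓ, mat g = x • (1 : Matrix (Fin 2) (Fin 2) (ZMod ℓ)) }

/-- The split Cartan `C_s(ℓ)`: invertible diagonal matrices. -/
def CsSet (ℓ : ℕ) : Set (GL2 ℓ) := { g | mat g 0 1 = 0 ∧ mat g 1 0 = 0 }

/-- The normalizer `N_s(ℓ)` of the split Cartan: diagonal and antidiagonal matrices. -/
def NsSet (ℓ : ℕ) : Set (GL2 ℓ) :=
  CsSet ℓ ∪ { g | mat g 0 0 = 0 ∧ mat g 1 1 = 0 }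

/-- The nonsplit Cartan `C_ns(ℓ)` relative to the nonsquare `ε`. -/
def CnsSet (ℓ : ℕ) (ε : ZMod ℓ) : Set (GL2 ℓ) :=
  { g | ∃ x y : ZMod ℓ, mat g = !![x, ε * y; y, x] }

/-- The normalizer `N_ns(ℓ)` of the nonsplit Cartan. -/
def NnsSet (ℓ : ℕ) (ε : ZMod ℓ) : Set (GL2 ℓ) :=
  CnsSet ℓ ε ∪ { g | ∃ x y : ZMod ℓ, mat g = !![x, -(ε * y); y, -x] }

/-- The ramified Cartan `C_r(ℓ)`. -/
def CrSet (ℓ : ℕ) : Set (GL2 ℓ) :=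
  { g | mat g 1 0 = 0 ∧ mat g 0 0 = mat g 1 1 }

/-- The Borel subgroup `B(ℓ)`: upper triangular matrices. -/
def BorelSet (ℓ : ℕ) : Set (GL2 ℓ) := { g | mat g 1 0 = 0 }

/-- `G` is conjugate in `GL₂(ℤ/ℓℤ)` to a subgroup of the set `M`. -/
def ConjSub {ℓ : ℕ} (G : Subgroup (GL2 ℓ)) (M : Set (GL2 ℓ)) : Prop :=
  ∃ a : GL2 ℓ, ∀ g ∈ G, a * g * a⁻¹ ∈ M

/-- `G` belongs to `Z(ℓ)`. -/
def BelongsZ {ℓ : ℕ} (G : Subgroup (GL2 ℓ)) : Prop := ConjSub G (ZSet ℓ)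

/-- `G` belongs to `C_s(ℓ)`. -/
def BelongsCs {ℓ : ℕ} (G : Subgroup (GL2 ℓ)) : Prop :=
  ConjSub G (CsSet ℓ) ∧ ¬ ConjSub G (ZSet ℓ)

/-- `G` belongs to `C_ns(ℓ)`. -/
def BelongsCns {ℓ : ℕ} (ε : ZMod ℓ) (G : Subgroup (GL2 ℓ)) : Prop :=
  ConjSub G (CnsSet ℓ ε) ∧ ¬ ConjSub G (ZSet ℓ)

/-- `G` belongs to `N_s(ℓ)`. -/
def BelongsNs {ℓ : ℕ} (G : Subgroup (GL2 ℓ)) : Prop :=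
  ConjSub G (NsSet ℓ) ∧ ¬ ConjSub G (CsSet ℓ)

/-- `G` belongs to `N_ns(ℓ)`. -/
def BelongsNns {ℓ : ℕ} (ε : ZMod ℓ) (G : Subgroup (GL2 ℓ)) : Prop :=
  ConjSub G (NnsSet ℓ ε) ∧ ¬ ConjSub G (CnsSet ℓ ε)

/-- `G` belongs to the ramified Cartan `C_r(ℓ)`. -/
def BelongsCr {ℓ : ℕ} (G : Subgroup (GL2 ℓ)) : Prop :=
  ConjSub G (CrSet ℓ) ∧ ¬ ConjSub G (ZSet ℓ)

/-- `H` is a twist of `G`: either `H = ⟨G, -I⟩`, or `H` is an index-2 subgroup of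
`⟨G, -I⟩` not containing `-I`. -/
def TwistOf {ℓ : ℕ} (G H : Subgroup (GL2 ℓ)) : Prop :=
  H = G ⊔ Subgroup.closure {(-1 : GL2 ℓ)} ∨
    (H ≤ G ⊔ Subgroup.closure {(-1 : GL2 ℓ)} ∧
      H.relIndex (G ⊔ Subgroup.closure {(-1 : GL2 ℓ)}) = 2 ∧
      (-1 : GL2 ℓ) ∉ H)

/-- `H` fixes a nonzero vector of `(ℤ/ℓℤ)²`. -/
def FixesVec {ℓ : ℕ} (H : Subgroup (GL2 ℓ)) : Prop :=
  ∃ v : Fin 2 → ZMod ℓ, v ≠ 0 ∧ ∀ h ∈ H, Matrix.mulVec (mat h) v = v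

end Paper

/-! A subgroup conjugate into `C_s(ℓ) ≅ (𝔽_ℓˣ)²` has order `d ∣ (ℓ - 1)²`, and `d ≠ 1` since the
trivial group is scalar. Conversely, write such a `d` as `d₁ d₂` with `dᵢ ∣ ℓ - 1`; the cyclic group
`𝔽_ℓˣ` has subgroups `Hᵢ` of order `dᵢ`, and the diagonal group `H₁ × H₂` has order `d` and is not
scalar, since it contains some `diag(u, 1)` or `diag(1, u)` with `u ≠ 1`. As
`|GL₂(𝔽_ℓ)| = ℓ(ℓ + 1)(ℓ - 1)²`, the indices are the numbers `ℓ(ℓ + 1)(ℓ - 1)² / d` for these `d`,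
and the stated description is this set rewritten, with `q` a prime factor of `d`. -/

namespace Matrix.GeneralLinearGroup

variable {n R : Type*} [Fintype n] [DecidableEq n] [CommRing R]

def diagonalUnits : (n → Rˣ) →* GL n R where
  toFun u := ⟨diagonal fun i ↦ u i, diagonal fun i ↦ ↑(u i)⁻¹, by simp, by simp⟩
  map_one' := by ext : 1; simp
  map_mul' u v := by ext : 1; simp

@[simp]
lemma val_diagonalUnits (u : n → Rˣ) :
    (diagonalUnits u : Matrix n n R) = diagonal fun i ↦ (u i : R) := rfl

lemma diagonalUnits_injective : Function.Injective (diagonalUnits (n := n) (R := R)) := by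
  intro u v huv
  funext i
  exact Units.ext <| by simpa using congr_arg (fun g : GL n R ↦ (g : Matrix n n R) i i) huv

lemma mem_range_diagonalUnits_iff {g : GL n R} :
    g ∈ (diagonalUnits (n := n) (R := R)).range ↔ (g : Matrix n n R).IsDiag := by
  constructor
  · rintro ⟨u, rfl⟩
    simp
  · intro hg
    have hdet : IsUnit (∏ i, (g : Matrix n n R).diag i) := by
      rw [← det_diagonal, hg.diagonal_diag]
      exact isUnits_det_units g
    exact ⟨fun i ↦ (IsUnit.prod_univ_iff.mp hdet i).unit, Units.ext hg.diagonal_diag⟩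

lemma eq_of_diagonalUnits_mem_center {u : n → Rˣ}
    (hu : diagonalUnits u ∈ Subgroup.center (GL n R)) (i j : n) : u i = u j := by
  obtain ⟨x, hx⟩ := mem_center_iff_val_mem_range_scalar.mp hu
  have hx' : diagonal (fun _ ↦ x) = diagonal fun i ↦ (u i : R) := by simpa using hx
  have hxu := diagonal_injective hx'
  ext
  rw [← congr_fun hxu i, ← congr_fun hxu j]

lemma map_diagonalUnits_pi_not_le_center [Nontrivial n] {H : n → Subgroup Rˣ}
    (hH : Subgroup.pi Set.univ H ≠ ⊥) :
    ¬ (Subgroup.pi Set.univ H).map diagonalUnits ≤ Subgroup.center (GL n R) := by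
  intro hle
  obtain ⟨u, hu, hu1⟩ := (Subgroup.pi Set.univ H).bot_or_exists_ne_one.resolve_left hH
  obtain ⟨i, hi⟩ : ∃ i, u i ≠ 1 := by
    by_contra! h
    exact hu1 (funext h)
  obtain ⟨j, hji⟩ := exists_ne i
  have hmem : Pi.mulSingle i (u i) ∈ Subgroup.pi Set.univ H :=
    (Subgroup.mulSingle_mem_pi i _).mpr fun _ ↦ hu i trivial
  have := eq_of_diagonalUnits_mem_center (hle ⟨_, hmem, rfl⟩) i j
  rw [Pi.mulSingle_eq_same, Pi.mulSingle_eq_of_ne hji] at this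
  exact hi this

end Matrix.GeneralLinearGroup

lemma Subgroup.card_pi {η : Type*} [Fintype η] {G : η → Type*} [∀ i, Group (G i)]
    (H : ∀ i, Subgroup (G i)) :
    Nat.card (Subgroup.pi Set.univ H) = ∏ i, Nat.card (H i) := by
  rw [← Nat.card_pi]
  exact Nat.card_congr <| (Equiv.subtypeEquivRight fun u ↦ by simp [Subgroup.mem_pi]).trans
    (Equiv.subtypePiEquivPi (p := fun i x ↦ x ∈ H i))

lemma IsCyclic.exists_subgroup_card_eq {α : Type*} [Group α] [Finite α] [IsCyclic α] {d : ℕ}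
    (hd : d ∣ Nat.card α) : ∃ H : Subgroup α, Nat.card H = d := by
  obtain ⟨g, hg⟩ := IsCyclic.exists_ofOrder_eq_natCard (α := α)
  rw [← hg] at hd
  have hg0 : orderOf g ≠ 0 := hg ▸ Nat.card_pos.ne'
  refine ⟨Subgroup.zpowers (g ^ (orderOf g / d)), ?_⟩
  rw [Nat.card_zpowers, orderOf_pow_orderOf_div hg0 hd]

lemma Nat.exists_dvd_sq_eq_mul_iff {a b n : ℕ} (ha : 0 < a) (hb : 0 < b) :
    (∃ d, d ∣ a ^ 2 ∧ d ≠ 1 ∧ b * a ^ 2 = d * n) ↔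
      0 < n ∧ b ∣ n ∧ ∃ q, q.Prime ∧ q ∣ a ∧ n ∣ b * a ^ 2 / q := by
  constructor
  · rintro ⟨d, ⟨k, hk⟩, hd1, hn⟩
    have hk0 : 0 < k := Nat.pos_of_ne_zero (by rintro rfl; simp_all)
    have hnk : n = b * k := by
      apply Nat.eq_of_mul_eq_mul_left (Nat.pos_of_dvd_of_pos ⟨k, hk⟩ (by positivity))
      rw [← hn, hk]; ring
    obtain ⟨q, hq, hqd⟩ := Nat.exists_prime_and_dvd hd1
    obtain ⟨m, rfl⟩ := hqd
    refine ⟨hnk ▸ Nat.mul_pos hb hk0, ⟨k, hnk⟩, q, hq,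
      hq.dvd_of_dvd_pow ((Dvd.intro m rfl).trans (Dvd.intro k hk.symm)), ⟨m, ?_⟩⟩
    rw [hn, mul_assoc, Nat.mul_div_cancel_left _ hq.pos, mul_comm]
  · rintro ⟨hn0, ⟨k, rfl⟩, q, hq, hqa, m, hm⟩
    have hqN : q ∣ b * a ^ 2 := Dvd.dvd.mul_left (hqa.trans (Dvd.intro_left _ (sq a).symm)) _
    have hN : b * a ^ 2 = q * m * (b * k) := by
      rw [← Nat.mul_div_cancel' hqN, hm]; ring
    refine ⟨q * m, ⟨k, ?_⟩, ?_, hN⟩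
    · apply Nat.eq_of_mul_eq_mul_left hb
      rw [hN]; ring
    · have hm0 : m ≠ 0 := by rintro rfl; simp at hN; omega
      nlinarith [hq.two_le, Nat.pos_of_ne_zero hm0]

namespace Paper

open Matrix.GeneralLinearGroup

variable {ℓ : ℕ}

def splitCartan (ℓ : ℕ) : Subgroup (GL2 ℓ) := (diagonalUnits (n := Fin 2) (R := ZMod ℓ)).range

lemma coe_splitCartan : (splitCartan ℓ : Set (GL2 ℓ)) = CsSet ℓ := by
  ext g
  rw [SetLike.mem_coe, splitCartan, mem_range_diagonalUnits_iff]
  simp [CsSet, mat, IsDiag, Pairwise, Fin.forall_fin_two]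

lemma card_splitCartan [Fact ℓ.Prime] : Nat.card (splitCartan ℓ) = (ℓ - 1) ^ 2 := by
  rw [splitCartan, MonoidHom.range_eq_map, Subgroup.card_map_of_injective diagonalUnits_injective,
    Subgroup.card_top, Nat.card_fun, Nat.card_eq_fintype_card (α := (ZMod ℓ)ˣ), ZMod.card_units,
    Nat.card_fin]

lemma card_GL2 [Fact ℓ.Prime] : Nat.card (GL2 ℓ) = ℓ * (ℓ + 1) * (ℓ - 1) ^ 2 := by
  rw [Matrix.card_GL_field, ZMod.card, Fin.prod_univ_two]
  obtain ⟨k, rfl⟩ : ∃ k, ℓ = k + 1 := ⟨ℓ - 1, by have := (Fact.out : ℓ.Prime).pos; omega⟩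
  simp only [Fin.val_zero, Fin.val_one, pow_zero, pow_one, Nat.add_sub_cancel]
  rw [show (k + 1) ^ 2 - 1 = k * (k + 2) by ring_nf; omega,
    show (k + 1) ^ 2 - (k + 1) = k * (k + 1) by ring_nf; omega]
  ring

lemma mem_ZSet_iff_mem_center {g : GL2 ℓ} : g ∈ ZSet ℓ ↔ g ∈ Subgroup.center (GL2 ℓ) := by
  simp [ZSet, mat, mem_center_iff_val_mem_range_scalar, smul_one_eq_diagonal, eq_comm]

lemma conjSub_ZSet_iff {G : Subgroup (GL2 ℓ)} :
    ConjSub G (ZSet ℓ) ↔ G ≤ Subgroup.center (GL2 ℓ) := by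
  simp only [ConjSub, mem_ZSet_iff_mem_center]
  constructor
  · rintro ⟨a, ha⟩ g hg
    have := Subgroup.Normal.conj_mem inferInstance _ (ha g hg) a⁻¹
    rwa [show a⁻¹ * (a * g * a⁻¹) * a⁻¹⁻¹ = g by group] at this
  · exact fun hG ↦ ⟨1, fun g hg ↦ by simpa using hG hg⟩

lemma ConjSub.card_dvd {G K : Subgroup (GL2 ℓ)} (h : ConjSub G K) :
    Nat.card G ∣ Nat.card K := by
  obtain ⟨a, ha⟩ := h
  rw [← Subgroup.card_map_of_injective (f := (MulAut.conj a).toMonoidHom) (MulAut.conj a).injective]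
  exact Subgroup.card_dvd_of_le fun _ ⟨g, hg, hx⟩ ↦ hx ▸ ha g hg

lemma BelongsCs.card_dvd_and_ne_one [Fact ℓ.Prime] {G : Subgroup (GL2 ℓ)} (h : BelongsCs G) :
    Nat.card G ∣ (ℓ - 1) ^ 2 ∧ Nat.card G ≠ 1 := by
  obtain ⟨hCs, hZ⟩ := h
  refine ⟨card_splitCartan (ℓ := ℓ) ▸ ConjSub.card_dvd (coe_splitCartan ▸ hCs), fun h1 ↦ hZ ?_⟩
  rw [conjSub_ZSet_iff, Subgroup.eq_bot_of_card_eq G h1]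
  exact bot_le

lemma exists_belongsCs_card_eq [Fact ℓ.Prime] {d : ℕ} (hd : d ∣ (ℓ - 1) ^ 2) (hd1 : d ≠ 1) :
    ∃ G : Subgroup (GL2 ℓ), BelongsCs G ∧ Nat.card G = d := by
  obtain ⟨d₁, d₂, hd₁, hd₂, rfl⟩ := dvd_mul.mp (sq (ℓ - 1) ▸ hd)
  have hcard : Nat.card (ZMod ℓ)ˣ = ℓ - 1 := by rw [Nat.card_eq_fintype_card, ZMod.card_units]
  obtain ⟨H₁, hH₁⟩ := IsCyclic.exists_subgroup_card_eq (hcard ▸ hd₁)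
  obtain ⟨H₂, hH₂⟩ := IsCyclic.exists_subgroup_card_eq (hcard ▸ hd₂)
  set P := Subgroup.pi Set.univ ![H₁, H₂]
  have hP : Nat.card P = d₁ * d₂ := by
    rw [Subgroup.card_pi, Fin.prod_univ_two]
    simp [hH₁, hH₂]
  refine ⟨P.map diagonalUnits, ⟨⟨1, fun g hg ↦ ?_⟩, ?_⟩, ?_⟩
  · simp only [one_mul, inv_one, mul_one, ← coe_splitCartan]
    exact Subgroup.map_le_range _ _ hg
  · rw [conjSub_ZSet_iff]
    exact map_diagonalUnits_pi_not_le_center fun h ↦ hd1 (hP ▸ Subgroup.card_eq_one.mpr h)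
  · rw [Subgroup.card_map_of_injective diagonalUnits_injective, hP]

end Paper

open Paper

theorem statement_3_general (ℓ : ℕ) (hℓ : Nat.Prime ℓ) :
    { n : ℕ | ∃ G : Subgroup (GL2 ℓ), Paper.BelongsCs G ∧ G.index = n } =
      { n : ℕ | 0 < n ∧ ℓ * (ℓ + 1) ∣ n ∧
        ∃ q : ℕ, q.Prime ∧ q ∣ (ℓ - 1) ∧ n ∣ ℓ * (ℓ + 1) * (ℓ - 1) ^ 2 / q } := by
  have := Fact.mk hℓ
  ext n
  rw [Set.mem_ofPred_eq, Set.mem_ofPred_eq,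
    ← Nat.exists_dvd_sq_eq_mul_iff (Nat.sub_pos_of_lt hℓ.one_lt) (by positivity [hℓ.pos])]
  constructor
  · rintro ⟨G, hG, rfl⟩
    exact ⟨Nat.card G, hG.card_dvd_and_ne_one.1, hG.card_dvd_and_ne_one.2,
      by rw [← card_GL2, Subgroup.card_mul_index]⟩
  · rintro ⟨d, hd, hd1, hN⟩
    obtain ⟨G, hG, rfl⟩ := exists_belongsCs_card_eq hd hd1
    refine ⟨G, hG, Nat.eq_of_mul_eq_mul_left (Nat.card_pos (α := G)) ?_⟩
    rw [Subgroup.card_mul_index, card_GL2, hN]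

theorem statement_3 (ℓ : ℕ) (hℓ : Nat.Prime ℓ) (hodd : Odd ℓ) :
    { n : ℕ | ∃ G : Subgroup (GL2 ℓ), Paper.BelongsCs G ∧ G.index = n } =
      { n : ℕ | 0 < n ∧ ℓ * (ℓ + 1) ∣ n ∧
        ∃ q : ℕ, q.Prime ∧ q ∣ (ℓ - 1) ∧ n ∣ ℓ * (ℓ + 1) * (ℓ - 1) ^ 2 / q } :=
  statement_3_general ℓ hℓ
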